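/- Let φ be an entire function of exponential type, let α ∈ ℂ, and let f be an entire function of exponential type. Then φ(D)f = e_α · φ_α(D)(f·e_{−α}), where φ_α(z) := φ(z+α); explicitly, for all z ∈ ℂ, ∑_{n≥0} (φ^{(n)}(0)/n!) f^{(n)}(z) = e^{αz} · ∑_{n≥0} (φ^{(n)}(α)/n!) (f·e_{−α})^{(n)}(z). -/

import Mathlib

open Filter Complex Set

/-- `log` with the convention `log 0 = -∞`, valued in the extended reals. -/
noncomputable def elog (x : ℝ) : EReal :=
  if x = 0 then (⊥ : EReal) else ((Real.log x : ℝ) : EReal)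

/-- Maximum modulus `M_f(r) = max_{|z|=r} |f z|`. -/
noncomputable def maxMod (f : ℂ → ℂ) (r : ℝ) : ℝ :=
  sSup ((fun z => ‖f z‖) '' Metric.sphere (0 : ℂ) r)

/-- The exponential type `τ(f) = limsup_{r→∞} log M_f(r) / r` (valued in `EReal`,
with the convention `log 0 = -∞`; note `log (M_f(r)^{1/r}) = log M_f(r) / r` for `r > 0`). -/
noncomputable def expType (f : ℂ → ℂ) : EReal :=
  Filter.limsup (fun r : ℝ => elog (maxMod f r ^ (1 / r))) Filter.atTop

/-- The indicator function `h_f(θ) = limsup_{r→∞} log |f (r e^{iθ})| / r`. -/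
noncomputable def indicatorFn (f : ℂ → ℂ) (θ : ℝ) : EReal :=
  Filter.limsup
    (fun r : ℝ => elog (‖f ((r : ℂ) * Complex.exp ((θ : ℂ) * Complex.I))‖ ^ (1 / r)))
    Filter.atTop

/-- Support function `H_K(z) = sup {Re (z u) : u ∈ K}`. -/
noncomputable def suppFn (K : Set ℂ) (z : ℂ) : ℝ :=
  sSup ((fun u => (z * u).re) '' K)

/-- The differential operator `φ(D) f = ∑ (φ^{(n)}(0)/n!) f^{(n)}`. -/
noncomputable def phiD (φ : ℂ → ℂ) (f : ℂ → ℂ) : ℂ → ℂ :=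
  fun z => ∑' n : ℕ, (iteratedDeriv n φ 0 / (Nat.factorial n : ℂ)) * iteratedDeriv n f z

/-- The norm `‖f‖_{K,n} = sup_z |f z| e^{-H_K(z) - |z|/n}`. -/
noncomputable def expNorm (K : Set ℂ) (n : ℕ) (f : ℂ → ℂ) : ℝ :=
  sSup (Set.range fun z : ℂ => ‖f z‖ * Real.exp (-suppFn K z - ‖z‖ / (n : ℝ)))

/-- Membership in `Exp(K)`: entire and `‖f‖_{K,n} < ∞` for all `n ≥ 1`. -/
def memExp (K : Set ℂ) (f : ℂ → ℂ) : Prop :=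
  Differentiable ℂ f ∧ ∀ n : ℕ, 1 ≤ n →
    BddAbove (Set.range fun z : ℂ =>
      ‖f z‖ * Real.exp (-suppFn K z - ‖z‖ / (n : ℝ)))

/-- Lower density of a set of natural numbers. -/
noncomputable def lowerDensity (A : Set ℕ) : ℝ :=
  Filter.liminf (fun N : ℕ => ((A ∩ Set.Iic N).ncard : ℝ) / (N : ℝ)) Filter.atTop

/-- `f` is hypercyclic for `φ(D)` on `H(ℂ)`. -/
def HC (φ f : ℂ → ℂ) : Prop :=
  ∀ g : ℂ → ℂ, Differentiable ℂ g → ∀ L : Set ℂ, IsCompact L → ∀ ε : ℝ, 0 < ε →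
    ∃ m : ℕ, ∀ z ∈ L, ‖(phiD φ)^[m] f z - g z‖ < ε

/-- `f` is frequently hypercyclic for `φ(D)` on `H(ℂ)`. -/
def FHC (φ f : ℂ → ℂ) : Prop :=
  ∀ g : ℂ → ℂ, Differentiable ℂ g → ∀ L : Set ℂ, IsCompact L → ∀ ε : ℝ, 0 < ε →
    0 < lowerDensity {m : ℕ | ∀ z ∈ L, ‖(phiD φ)^[m] f z - g z‖ < ε}

/-- `f` is hypercyclic for `φ(D)` on `Exp(K)`. -/
def HCExp (K : Set ℂ) (φ f : ℂ → ℂ) : Prop :=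
  memExp K f ∧ ∀ g : ℂ → ℂ, memExp K g → ∀ n : ℕ, 1 ≤ n → ∀ ε : ℝ, 0 < ε →
    ∃ m : ℕ, expNorm K n (fun z => (phiD φ)^[m] f z - g z) < ε

/-- `f` is frequently hypercyclic for `φ(D)` on `Exp(K)`. -/
def FHCExp (K : Set ℂ) (φ f : ℂ → ℂ) : Prop :=
  memExp K f ∧ ∀ g : ℂ → ℂ, memExp K g → ∀ n : ℕ, 1 ≤ n → ∀ ε : ℝ, 0 < ε →
    0 < lowerDensity {m : ℕ | expNorm K n (fun z => (phiD φ)^[m] f z - g z) < ε}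

/-- The Borel transform `Bf(z) = ∑ f^{(n)}(0) z^{-(n+1)}`. -/
noncomputable def borelT (f : ℂ → ℂ) : ℂ → ℂ :=
  fun z => ∑' n : ℕ, iteratedDeriv n f 0 / z ^ (n + 1)

/-- The transform `Φ_φ f (z) = ∑ (φ(D)^n f)(0) z^n / n!`. -/
noncomputable def PhiT (φ f : ℂ → ℂ) : ℂ → ℂ :=
  fun z => ∑' n : ℕ, ((phiD φ)^[n] f 0) * z ^ n / (Nat.factorial n : ℂ)

/-!
Expanding `φ⁽ᵏ⁾(0)` in its Taylor series about `α` turns `φ(D)f(z)` into the double series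
`∑ₖ ∑ₘ f⁽ᵏ⁾(z)/k! · φ⁽ᵏ⁺ᵐ⁾(α) (-α)ᵐ/m!`. It converges absolutely: if `|φ(w)| ≤ C e^{τ|w|}`,
Cauchy's estimate on circles of radius `j + 1` gives `φ⁽ʲ⁾(α) = O(e^{τj})`, while for the entire
function `f` Cauchy's estimate on a circle of radius `2e^τ` gives `f⁽ᵏ⁾(z)/k! = O((2e^τ)⁻ᵏ)`.
Summing instead along the antidiagonals `k + m = n` gives, by the Leibniz rule,
`φ⁽ⁿ⁾(α)/n! · e^{αz} (f e_{-α})⁽ⁿ⁾(z)`, and `φ⁽ⁿ⁾(α) = φ_α⁽ⁿ⁾(0)`.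
-/

section

open Finset
open scoped Nat

theorem Summable.tsum_prod_eq_tsum_sum_antidiagonal {A E : Type*} [AddCommMonoid A]
    [HasAntidiagonal A] [AddCommMonoid E] [TopologicalSpace E] [ContinuousAdd E] [T3Space E]
    {F : A × A → E} (hF : Summable F) :
    ∑' p, F p = ∑' n, ∑ kl ∈ antidiagonal n, F kl := by
  conv_rhs => congr; ext; rw [← sum_finset_coe, ← tsum_fintype (L := .unconditional _)]
  rw [← HasAntidiagonal.sigmaAntidiagonalEquivProd.tsum_eq F]
  exact (HasAntidiagonal.sigmaAntidiagonalEquivProd.summable_iff.mpr hF).tsum_sigma'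
    fun n ↦ (hasSum_fintype _).summable

theorem iteratedDeriv_iteratedDeriv {𝕜 F : Type*} [NontriviallyNormedField 𝕜]
    [NormedAddCommGroup F] [NormedSpace 𝕜 F] (f : 𝕜 → F) (m k : ℕ) :
    iteratedDeriv m (iteratedDeriv k f) = iteratedDeriv (m + k) f := by
  simp only [iteratedDeriv_eq_iterate, Function.iterate_add_apply]

theorem iteratedDeriv_eq_tsum_iteratedDeriv_add {f : ℂ → ℂ} (hf : Differentiable ℂ f)
    (k : ℕ) (c z : ℂ) :
    iteratedDeriv k f z = ∑' m, iteratedDeriv (k + m) f c * (z - c) ^ m / m ! := by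
  rw [← taylorSeries_eq_of_entire' c z
    (hf.contDiff.differentiable_iteratedDeriv k (WithTop.coe_lt_top _))]
  refine tsum_congr fun m ↦ ?_
  rw [iteratedDeriv_iteratedDeriv, add_comm m k]
  ring

theorem iteratedDeriv_mul_cexp_const_mul {f : ℂ → ℂ} (hf : Differentiable ℂ f) (β z : ℂ)
    (n : ℕ) :
    iteratedDeriv n (fun w ↦ f w * exp (β * w)) z =
      exp (β * z) * ∑ kl ∈ antidiagonal n, n.choose kl.1 * iteratedDeriv kl.1 f z * β ^ kl.2 := by
  have hexp : ContDiffAt ℂ n (fun w ↦ exp (β * w)) z := by fun_prop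
  rw [iteratedDeriv_fun_mul hf.contDiff.contDiffAt hexp, mul_sum,
    Nat.sum_antidiagonal_eq_sum_range_succ
      fun k m ↦ exp (β * z) * (n.choose k * iteratedDeriv k f z * β ^ m)]
  refine sum_congr rfl fun k _ ↦ ?_
  simp only [iteratedDeriv_cexp_const_mul]
  ring

theorem div_factorial_mul_div_factorial (k m : ℕ) (x y : ℂ) :
    x / k ! * (y / m !) = (k + m).choose k * (x * y) / (k + m)! := by
  have hchoose : ((k + m).choose m : ℂ) ≠ 0 := by
    exact_mod_cast (Nat.choose_pos (Nat.le_add_left m k)).ne'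
  rw [← Nat.add_choose_mul_factorial_mul_factorial k m, Nat.choose_symm_add]
  push_cast
  field_simp

theorem summable_mul_shifted_of_geometric_bounds {a g : ℕ → ℂ} {A B ρ q : ℝ} (hρ : 0 ≤ ρ)
    (hq : 0 ≤ q) (hρq : ρ * q < 1) (ha : ∀ k, ‖a k‖ ≤ A * ρ ^ k) (hg : ∀ j, ‖g j‖ ≤ B * q ^ j)
    (β : ℂ) : Summable fun p : ℕ × ℕ ↦ a p.1 * (g (p.1 + p.2) * β ^ p.2 / p.2 !) := by
  have hA : 0 ≤ A := by simpa using (norm_nonneg _).trans (ha 0)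
  have hB : 0 ≤ B := by simpa using (norm_nonneg _).trans (hg 0)
  refine Summable.of_norm_bounded
    (g := fun p : ℕ × ℕ ↦ A * B * (ρ * q) ^ p.1 * ((q * ‖β‖) ^ p.2 / p.2 !)) ?_ ?_
  · exact ((summable_geometric_of_lt_one (by positivity) hρq).mul_left _).mul_of_nonneg
      (Real.summable_pow_div_factorial _) (fun _ ↦ by positivity) (fun _ ↦ by positivity)
  · rintro ⟨k, m⟩
    calc ‖a k * (g (k + m) * β ^ m / m !)‖ = ‖a k‖ * (‖g (k + m)‖ * ‖β‖ ^ m / m !) := by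
          simp [norm_pow]
      _ ≤ A * ρ ^ k * (B * q ^ (k + m) * ‖β‖ ^ m / m !) := by gcongr <;> simp [ha, hg]
      _ = A * B * (ρ * q) ^ k * ((q * ‖β‖) ^ m / m !) := by ring

theorem maxMod_nonneg (h : ℂ → ℂ) (r : ℝ) : 0 ≤ maxMod h r :=
  Real.sSup_nonneg (by rintro _ ⟨w, -, rfl⟩; positivity)

theorem norm_le_maxMod {h : ℂ → ℂ} (hc : Continuous h) (z : ℂ) : ‖h z‖ ≤ maxMod h ‖z‖ :=
  le_csSup ((isCompact_sphere 0 _).image (continuous_norm.comp hc)).bddAbove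
    ⟨z, by simp, rfl⟩

theorem eventually_maxMod_le_exp_of_expType_lt {h : ℂ → ℂ} {b : ℝ} (hb : expType h < b) :
    ∀ᶠ r in atTop, maxMod h r ≤ Real.exp (b * r) := by
  filter_upwards [eventually_lt_of_limsup_lt hb, eventually_gt_atTop 0] with r hlt hr
  rcases (maxMod_nonneg h r).eq_or_lt with hM | hM
  · rw [← hM]; positivity
  · have hlog : Real.log (maxMod h r) / r < b := by
      rw [elog, if_neg (Real.rpow_pos_of_pos hM _).ne', Real.log_rpow hM] at hlt
      rw [div_eq_inv_mul, ← one_div]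
      exact_mod_cast hlt
    rw [← Real.exp_log hM, Real.exp_le_exp]
    exact ((div_lt_iff₀ hr).mp hlog).le

theorem exists_norm_le_mul_exp_of_expType_lt_top {h : ℂ → ℂ} (hc : Continuous h)
    (ht : expType h < ⊤) : ∃ C τ : ℝ, 0 ≤ τ ∧ ∀ z, ‖h z‖ ≤ C * Real.exp (τ * ‖z‖) := by
  obtain ⟨b, hb, -⟩ := EReal.exists_between_coe_real ht
  obtain ⟨R, hR⟩ := eventually_atTop.mp
    (eventually_maxMod_le_exp_of_expType_lt
      (hb.trans_le (EReal.coe_le_coe_iff.mpr (le_max_left b 0))))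
  obtain ⟨C₀, hC₀⟩ :=
    (isCompact_closedBall (0 : ℂ) R).exists_bound_of_continuousOn hc.continuousOn
  refine ⟨max C₀ 1, max b 0, le_max_right _ _, fun z ↦ ?_⟩
  have hexp : 1 ≤ Real.exp (max b 0 * ‖z‖) := Real.one_le_exp (by positivity)
  rcases le_or_gt ‖z‖ R with hz | hz
  · calc ‖h z‖ ≤ C₀ := by simpa using hC₀ z (by simpa using hz)
      _ ≤ max C₀ 1 * 1 := by simp
      _ ≤ max C₀ 1 * Real.exp (max b 0 * ‖z‖) := by gcongr
  · calc ‖h z‖ ≤ maxMod h ‖z‖ := norm_le_maxMod hc z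
      _ ≤ Real.exp (max b 0 * ‖z‖) := hR _ hz.le
      _ ≤ max C₀ 1 * Real.exp (max b 0 * ‖z‖) :=
          le_mul_of_one_le_left (by positivity) (le_max_right _ _)

theorem norm_iteratedDeriv_le_of_norm_le_mul_exp {h : ℂ → ℂ} (hd : Differentiable ℂ h)
    {C τ : ℝ} (hτ : 0 ≤ τ) (hb : ∀ z, ‖h z‖ ≤ C * Real.exp (τ * ‖z‖)) (w : ℂ) (j : ℕ) :
    ‖iteratedDeriv j h w‖ ≤ C * Real.exp (τ * (‖w‖ + 1)) * Real.exp τ ^ j := by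
  have hC : 0 ≤ C := by simpa using (norm_nonneg _).trans (hb 0)
  have hR : (0 : ℝ) < j + 1 := by positivity
  have hsphere :
      ∀ u ∈ Metric.sphere w (j + 1), ‖h u‖ ≤ C * Real.exp (τ * (‖w‖ + (j + 1))) := by
    intro u hu
    have hu' : ‖u‖ ≤ ‖w‖ + (j + 1) := by
      simpa [mem_sphere_iff_norm.mp hu] using norm_le_norm_add_norm_sub' u w
    exact (hb u).trans (by gcongr)
  have hfact : (j ! : ℝ) ≤ (j + 1 : ℝ) ^ j := by
    exact_mod_cast (Nat.factorial_le_pow j).trans (Nat.pow_le_pow_left j.le_succ j)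
  calc ‖iteratedDeriv j h w‖ ≤ j ! * (C * Real.exp (τ * (‖w‖ + (j + 1)))) / (j + 1 : ℝ) ^ j :=
        norm_iteratedDeriv_le_of_forall_mem_sphere_norm_le j hR hd.diffContOnCl hsphere
    _ ≤ (j + 1 : ℝ) ^ j * (C * Real.exp (τ * (‖w‖ + (j + 1)))) / (j + 1 : ℝ) ^ j := by gcongr
    _ = C * Real.exp (τ * (‖w‖ + 1)) * Real.exp τ ^ j := by
        rw [← Real.exp_nat_mul, mul_div_cancel_left₀ _ (by positivity), mul_assoc, ← Real.exp_add]
        ring_nf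

theorem exists_norm_iteratedDeriv_div_factorial_le {f : ℂ → ℂ} (hf : Differentiable ℂ f) (z : ℂ)
    {R : ℝ} (hR : 0 < R) : ∃ M, ∀ k, ‖iteratedDeriv k f z / (k ! : ℂ)‖ ≤ M * R⁻¹ ^ k := by
  obtain ⟨M, hM⟩ :=
    (isCompact_sphere z R).exists_bound_of_continuousOn hf.continuous.continuousOn
  refine ⟨M, fun k ↦ ?_⟩
  have hk : (0 : ℝ) < k ! := by positivity
  rw [norm_div, Complex.norm_natCast, div_le_iff₀ hk, inv_pow, ← div_eq_mul_inv, mul_comm,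
    ← mul_div_assoc]
  exact norm_iteratedDeriv_le_of_forall_mem_sphere_norm_le k hR hf.diffContOnCl hM

theorem phiD_eq_tsum_tsum {ψ : ℂ → ℂ} (hψ : Differentiable ℂ ψ) (f : ℂ → ℂ) (α z : ℂ) :
    phiD ψ f z = ∑' k, ∑' m,
      iteratedDeriv k f z / k ! * (iteratedDeriv (k + m) ψ α * (-α) ^ m / m !) := by
  refine tsum_congr fun k ↦ ?_
  rw [tsum_mul_left, ← zero_sub, ← iteratedDeriv_eq_tsum_iteratedDeriv_add hψ]
  ring

theorem phiD_comp_add_const_mul_cexp {ψ f : ℂ → ℂ} (hf : Differentiable ℂ f) (α z : ℂ) :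
    phiD (fun w ↦ ψ (w + α)) (fun w ↦ f w * exp (-α * w)) z = exp (-α * z) * ∑' n,
      ∑ kl ∈ antidiagonal n,
        iteratedDeriv kl.1 f z / kl.1 ! *
          (iteratedDeriv (kl.1 + kl.2) ψ α * (-α) ^ kl.2 / kl.2 !) := by
  rw [phiD, ← tsum_mul_left]
  refine tsum_congr fun n ↦ ?_
  simp only [iteratedDeriv_comp_add_const, zero_add]
  rw [iteratedDeriv_mul_cexp_const_mul hf, mul_sum, mul_sum, mul_sum]
  refine sum_congr rfl fun kl hkl ↦ ?_
  rw [HasAntidiagonal.mem_antidiagonal] at hkl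
  rw [div_factorial_mul_div_factorial, hkl]
  ring

end

theorem stmt_15_general (φ : ℂ → ℂ) (hφ : Differentiable ℂ φ) (hφτ : expType φ < ⊤)
    (α : ℂ) (f : ℂ → ℂ) (hf : Differentiable ℂ f) :
    ∀ z : ℂ, phiD φ f z =
      Complex.exp (α * z) *
        phiD (fun w => φ (w + α)) (fun w => f w * Complex.exp (-α * w)) z := by
  intro z
  obtain ⟨C, τ, hτ, hφC⟩ := exists_norm_le_mul_exp_of_expType_lt_top hφ.continuous hφτ
  obtain ⟨M, hfM⟩ := exists_norm_iteratedDeriv_div_factorial_le hf z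
    (by positivity : 0 < 2 * Real.exp τ)
  have hsum := summable_mul_shifted_of_geometric_bounds (by positivity) (Real.exp_pos τ).le
    (by field_simp; norm_num) hfM (norm_iteratedDeriv_le_of_norm_le_mul_exp hφ hτ hφC α) (-α)
  rw [phiD_eq_tsum_tsum hφ f α, ← hsum.tsum_prod, hsum.tsum_prod_eq_tsum_sum_antidiagonal,
    phiD_comp_add_const_mul_cexp hf, ← mul_assoc, ← Complex.exp_add, neg_mul, add_neg_cancel,
    Complex.exp_zero, one_mul]

/-- `φ(D) f = e_α ⋅ φ_α(D)(f e_{-α})` where `φ_α = φ(· + α)`. -/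
theorem stmt_15 (φ : ℂ → ℂ) (hφ : Differentiable ℂ φ) (hφτ : expType φ < ⊤)
    (α : ℂ) (f : ℂ → ℂ) (hf : Differentiable ℂ f) (hfτ : expType f < ⊤) :
    ∀ z : ℂ, phiD φ f z =
      Complex.exp (α * z) *
        phiD (fun w => φ (w + α)) (fun w => f w * Complex.exp (-α * w)) z :=
  stmt_15_general φ hφ hφτ α f hf
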